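/- Let A be a unital associative algebra over a field of characteristic zero with a Rota–Baxter operator R of weight 0. Then (R(1))ⁿ = n!·Rⁿ(1) for all n ∈ ℕ. -/

import Mathlib

/-- A Rota–Baxter operator of weight `lam` on an algebra over a field `F`. -/
def IsRotaBaxter (F : Type*) {A : Type*} [Field F] [NonUnitalNonAssocRing A]
    [Module F A] (lam : F) (R : A →ₗ[F] A) : Prop :=
  ∀ x y : A, R x * R y = R (R x * y + x * R y + lam • (x * y))

/-! The weight-zero identity with `x = 1`, `y = Rᵏ(1)` reads
`R(1) · Rᵏ⁺¹(1) = R(R(1) · Rᵏ(1) + Rᵏ⁺¹(1))`, so by induction on `k`,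
`R(1) · Rᵏ(1) = (k + 1) Rᵏ⁺¹(1)`; multiplying these out gives `R(1)ⁿ = n! Rⁿ(1)`. -/

namespace IsRotaBaxter

variable {F A : Type*} [Field F]

theorem mul_of_weight_zero [NonUnitalNonAssocRing A] [Module F A] {R : A →ₗ[F] A}
    (hR : IsRotaBaxter F 0 R) (x y : A) : R x * R y = R (R x * y + x * R y) := by
  simpa using hR x y

theorem apply_one_mul_pow_apply_one [NonAssocRing A] [Module F A] {R : A →ₗ[F] A}
    (hR : IsRotaBaxter F 0 R) (k : ℕ) :
    R 1 * (R ^ k) 1 = (k + 1) • (R ^ (k + 1)) 1 := by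
  have pow_succ_apply (j : ℕ) (x : A) : (R ^ (j + 1)) x = R ((R ^ j) x) := by
    rw [pow_succ', Module.End.mul_apply]
  induction k with
  | zero => simp
  | succ k ih =>
    calc R 1 * (R ^ (k + 1)) 1
        = R (R 1 * (R ^ k) 1 + 1 * (R ^ (k + 1)) 1) := by
          rw [pow_succ_apply k, hR.mul_of_weight_zero]
      _ = (k + 1 + 1) • (R ^ (k + 2)) 1 := by
          rw [ih, one_mul, ← succ_nsmul, map_nsmul, ← pow_succ_apply]

theorem apply_one_pow [Ring A] [Module F A] {R : A →ₗ[F] A} (hR : IsRotaBaxter F 0 R)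
    (n : ℕ) : R 1 ^ n = n.factorial • (R ^ n) 1 := by
  induction n with
  | zero => simp
  | succ n ih =>
    rw [pow_succ', ih, mul_smul_comm, hR.apply_one_mul_pow_apply_one, smul_smul,
      Nat.factorial_succ, mul_comm]

end IsRotaBaxter

theorem rb_weight_zero_powers_of_R1_general {F A : Type*} [Field F]
    [Ring A] [Algebra F A]
    (R : A →ₗ[F] A) (hR : IsRotaBaxter F (0 : F) R) (n : ℕ) :
    (R 1) ^ n = ((Nat.factorial n : ℕ) : F) • ((R ^ n) (1 : A)) := by
  rw [Nat.cast_smul_eq_nsmul, hR.apply_one_pow]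

/-- For a weight-zero RB-operator `R` on a unital associative algebra over a
field of characteristic zero, `(R 1)ⁿ = n! Rⁿ(1)` for all `n`. -/
theorem rb_weight_zero_powers_of_R1 {F A : Type*} [Field F] [CharZero F]
    [Ring A] [Algebra F A]
    (R : A →ₗ[F] A) (hR : IsRotaBaxter F (0 : F) R) (n : ℕ) :
    (R 1) ^ n = ((Nat.factorial n : ℕ) : F) • ((R ^ n) (1 : A)) :=
  rb_weight_zero_powers_of_R1_general R hR n
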